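/- arXiv:1507.08320 — 7 statements merged into one kernel-verified Lean document; each statement's English description precedes it below -/
import Mathlib

section
/- Let ω(k) = |k|_{Λ*}^α with 0 < α ≤ 1, where |k|_{Λ*} = (4 ∑_{i=1}^d sin²(k_i/2))^{1/2}. Then for any k, the equation ω(p) + ω(k−p) = ω(k) (componentwise mod 2π) has only the solutions p ≡ 0 and p ≡ k. -/
set_option maxHeartbeats 800000


open Real

noncomputable def latticeNorm {d : ℕ} (k : Fin d → ℝ) : ℝ :=
  Real.sqrt (4 * ∑ i, Real.sin (k i / 2) ^ 2)

/-- `p ≡ q` componentwise mod `2π`. -/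
def congTorus {d : ℕ} (p q : Fin d → ℝ) : Prop :=
  ∀ i, ∃ m : ℤ, p i - q i = 2 * Real.pi * m

lemma abs_sin_add_le' (x y : ℝ) :
    |Real.sin (x + y)| ≤ |Real.sin x| * |Real.cos y| + |Real.cos x| * |Real.sin y| := by
  rw [Real.sin_add]
  calc |Real.sin x * Real.cos y + Real.cos x * Real.sin y|
      ≤ |Real.sin x * Real.cos y| + |Real.cos x * Real.sin y| := abs_add_le _ _
    _ = |Real.sin x| * |Real.cos y| + |Real.cos x| * |Real.sin y| := by rw [abs_mul, abs_mul]

lemma abs_sin_add_le (x y : ℝ) : |Real.sin (x + y)| ≤ |Real.sin x| + |Real.sin y| := by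
  refine (abs_sin_add_le' x y).trans ?_
  have h1 : |Real.sin x| * |Real.cos y| ≤ |Real.sin x| * 1 :=
    mul_le_mul_of_nonneg_left (Real.abs_cos_le_one y) (abs_nonneg _)
  have h2 : |Real.cos x| * |Real.sin y| ≤ 1 * |Real.sin y| :=
    mul_le_mul_of_nonneg_right (Real.abs_cos_le_one x) (abs_nonneg _)
  linarith

lemma sin_eq_zero_of_eq (x y : ℝ) (h : |Real.sin (x + y)| = |Real.sin x| + |Real.sin y|) :
    Real.sin x = 0 ∨ Real.sin y = 0 := by
  have h2 : |Real.sin x| + |Real.sin y| ≤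
      |Real.sin x| * |Real.cos y| + |Real.cos x| * |Real.sin y| := h ▸ abs_sin_add_le' x y
  by_contra hc
  push_neg at hc
  obtain ⟨hx, hy⟩ := hc
  have hx' : 0 < |Real.sin x| := abs_pos.mpr hx
  have hy' : 0 < |Real.sin y| := abs_pos.mpr hy
  have hcx : |Real.cos x| < 1 := by
    rcases (Real.abs_cos_le_one x).lt_or_eq with h | h
    · exact h
    · exfalso
      apply hx
      have hc1 : Real.cos x ^ 2 = 1 := by rw [← sq_abs, h]; norm_num
      have hs0 : Real.sin x ^ 2 = 0 := by
        have := Real.sin_sq_add_cos_sq x; linarith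
      exact sq_eq_zero_iff.mp hs0
  have hcy : |Real.cos y| ≤ 1 := Real.abs_cos_le_one y
  have h3 : |Real.sin x| * |Real.cos y| ≤ |Real.sin x| * 1 :=
    mul_le_mul_of_nonneg_left hcy hx'.le
  have h4 : |Real.cos x| * |Real.sin y| < 1 * |Real.sin y| :=
    mul_lt_mul_of_pos_right hcx hy'
  linarith

/-- For the lattice dispersion `ω(k) = |k|_{Λ*}^α` with `0 < α ≤ 1`, the resonance
`ω(p) + ω(k-p) = ω(k)` has only the solutions `p ≡ 0` and `p ≡ k` (mod 2π). -/
theorem stmt2 {d : ℕ} (α : ℝ) (h0 : 0 < α) (h1 : α ≤ 1) (k p : Fin d → ℝ)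
    (hres : latticeNorm p ^ α + latticeNorm (k - p) ^ α = latticeNorm k ^ α) :
    congTorus p 0 ∨ congTorus p k := by
  classical
  set u : Fin d → ℝ := fun i => Real.sin (p i / 2) with hu
  set v : Fin d → ℝ := fun i => Real.sin ((k i - p i) / 2) with hv
  set w : Fin d → ℝ := fun i => Real.sin (k i / 2) with hw
  have hsplit : ∀ i, k i / 2 = p i / 2 + (k i - p i) / 2 := fun i => by ring
  have hw_le : ∀ i, |w i| ≤ |u i| + |v i| := fun i => by
    show |Real.sin (k i / 2)| ≤ |Real.sin (p i / 2)| + |Real.sin ((k i - p i) / 2)|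
    rw [hsplit i]; exact abs_sin_add_le _ _
  set S : ℝ := ∑ i, u i ^ 2 with hS
  set T : ℝ := ∑ i, v i ^ 2 with hT
  set W : ℝ := ∑ i, w i ^ 2 with hW
  have hS0 : 0 ≤ S := Finset.sum_nonneg fun i _ => sq_nonneg _
  have hT0 : 0 ≤ T := Finset.sum_nonneg fun i _ => sq_nonneg _
  have hW0 : 0 ≤ W := Finset.sum_nonneg fun i _ => sq_nonneg _
  -- express the lattice norms
  have hnorm : ∀ q : Fin d → ℝ, latticeNorm q =
      2 * Real.sqrt (∑ i, Real.sin (q i / 2) ^ 2) := by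
    intro q
    rw [latticeNorm, show (4 : ℝ) = 2 ^ 2 by norm_num, Real.sqrt_mul (by positivity),
      Real.sqrt_sq (by norm_num : (0:ℝ) ≤ 2)]
  have hLp : latticeNorm p = 2 * Real.sqrt S := hnorm p
  have hLk : latticeNorm k = 2 * Real.sqrt W := hnorm k
  have hLkp : latticeNorm (k - p) = 2 * Real.sqrt T := by
    rw [hnorm (k - p), hT]
    congr 1
  -- Cauchy–Schwarz
  have hCS : ∑ i, |u i| * |v i| ≤ Real.sqrt S * Real.sqrt T := by
    have := Real.sum_mul_le_sqrt_mul_sqrt (Finset.univ : Finset (Fin d))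
      (fun i => |u i|) (fun i => |v i|)
    simpa [sq_abs] using this
  -- pointwise bound on squares
  have hsq_le : ∀ i, w i ^ 2 ≤ (|u i| + |v i|) ^ 2 := fun i => by
    have := hw_le i
    nlinarith [abs_nonneg (w i), sq_abs (w i)]
  have hexp : ∑ i, (|u i| + |v i|) ^ 2 = S + T + 2 * ∑ i, |u i| * |v i| := by
    rw [hS, hT, Finset.mul_sum, ← Finset.sum_add_distrib, ← Finset.sum_add_distrib]
    refine Finset.sum_congr rfl fun i _ => by
      rw [← sq_abs (u i), ← sq_abs (v i)]; ring
  have hWle : W ≤ (Real.sqrt S + Real.sqrt T) ^ 2 := by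
    have h5 : W ≤ ∑ i, (|u i| + |v i|) ^ 2 :=
      Finset.sum_le_sum fun i _ => hsq_le i
    have h6 : (Real.sqrt S + Real.sqrt T) ^ 2 = S + T + 2 * (Real.sqrt S * Real.sqrt T) := by
      rw [add_sq, Real.sq_sqrt hS0, Real.sq_sqrt hT0]; ring
    rw [h6]; rw [hexp] at h5; linarith
  -- triangle inequality
  have htri : Real.sqrt W ≤ Real.sqrt S + Real.sqrt T := by
    calc Real.sqrt W ≤ Real.sqrt ((Real.sqrt S + Real.sqrt T) ^ 2) := Real.sqrt_le_sqrt hWle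
      _ = Real.sqrt S + Real.sqrt T := Real.sqrt_sq (add_nonneg (Real.sqrt_nonneg _) (Real.sqrt_nonneg _))
  -- set A, B, C
  set A : ℝ := 2 * Real.sqrt S with hA
  set B : ℝ := 2 * Real.sqrt T with hB
  set C : ℝ := 2 * Real.sqrt W with hC
  have hA0 : 0 ≤ A := mul_nonneg (by norm_num) (Real.sqrt_nonneg _)
  have hB0 : 0 ≤ B := mul_nonneg (by norm_num) (Real.sqrt_nonneg _)
  have hC0 : 0 ≤ C := mul_nonneg (by norm_num) (Real.sqrt_nonneg _)
  have hres' : A ^ α + B ^ α = C ^ α := by rw [← hLp, ← hLkp, ← hLk]; exact hres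
  have htri' : C ≤ A + B := by rw [hA, hB, hC]; linarith
  -- subadditivity of rpow forces equality C = A + B
  have hsub : (A + B) ^ α ≤ A ^ α + B ^ α := by
    have := NNReal.rpow_add_le_add_rpow (Real.toNNReal A) (Real.toNNReal B) h0.le h1
    have h7 := NNReal.coe_le_coe.mpr this
    push_cast at h7
    rwa [Real.coe_toNNReal A hA0, Real.coe_toNNReal B hB0] at h7
  have hCeq : C = A + B := by
    by_contra hne
    have hlt : C < A + B := lt_of_le_of_ne htri' hne
    have : C ^ α < (A + B) ^ α := Real.rpow_lt_rpow hC0 hlt h0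
    linarith [hsub, hres'.ge, hres'.le]
  -- equality in the triangle inequality
  have hsqrtW : Real.sqrt W = Real.sqrt S + Real.sqrt T := by
    rw [hA, hB, hC] at hCeq; linarith
  have hWeq : W = S + T + 2 * (Real.sqrt S * Real.sqrt T) := by
    have h10 : W = (Real.sqrt S + Real.sqrt T) ^ 2 := by
      rw [← Real.sq_sqrt hW0, hsqrtW]
    rw [h10, add_sq, Real.sq_sqrt hS0, Real.sq_sqrt hT0]; ring
  -- squeeze: sum of squares equality and Cauchy–Schwarz equality
  have h5 : W ≤ ∑ i, (|u i| + |v i|) ^ 2 := Finset.sum_le_sum fun i _ => hsq_le i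
  have hcross : ∑ i, |u i| * |v i| = Real.sqrt S * Real.sqrt T := by
    rw [hexp] at h5
    linarith [hCS, hWeq]
  have hsum_eq : ∑ i, w i ^ 2 = ∑ i, (|u i| + |v i|) ^ 2 := by
    rw [hexp, hcross, ← hWeq]
  -- termwise equality
  have hterm : ∀ i, w i ^ 2 = (|u i| + |v i|) ^ 2 := by
    intro i
    have hdiff : ∑ j, ((|u j| + |v j|) ^ 2 - w j ^ 2) = 0 := by
      rw [Finset.sum_sub_distrib, ← hsum_eq, sub_self]
    have := (Finset.sum_eq_zero_iff_of_nonneg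
      (fun j _ => sub_nonneg.mpr (hsq_le j))).mp hdiff i (Finset.mem_univ i)
    linarith [this]
  -- each component: u i = 0 or v i = 0
  have hzero : ∀ i, u i = 0 ∨ v i = 0 := by
    intro i
    have habs : |w i| = |u i| + |v i| := by
      have h8 := hterm i
      rw [← sq_abs (w i)] at h8
      have := abs_nonneg (w i)
      have h9 : 0 ≤ |u i| + |v i| := add_nonneg (abs_nonneg _) (abs_nonneg _)
      nlinarith
    have habs' : |Real.sin (p i / 2 + (k i - p i) / 2)| =
        |Real.sin (p i / 2)| + |Real.sin ((k i - p i) / 2)| := by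
      rw [← hsplit i]; exact habs
    exact sin_eq_zero_of_eq _ _ habs'
  -- cross sum is zero
  have hcross0 : ∑ i, |u i| * |v i| = 0 := by
    refine Finset.sum_eq_zero fun i _ => ?_
    rcases hzero i with h | h <;> simp [h]
  have hST : Real.sqrt S * Real.sqrt T = 0 := by rw [← hcross]; exact hcross0
  rcases mul_eq_zero.mp hST with h | h
  · left
    have hSz : S = 0 := by
      exact le_antisymm (Real.sqrt_eq_zero'.mp h) hS0
    have hui : ∀ i, u i = 0 := by
      intro i
      have := (Finset.sum_eq_zero_iff_of_nonneg (fun i _ => sq_nonneg (u i))).mp hSz i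
        (Finset.mem_univ i)
      exact sq_eq_zero_iff.mp this
    intro i
    have hthis : Real.sin (p i / 2) = 0 := hui i
    rcases Real.sin_eq_zero_iff.mp hthis with ⟨m, hm⟩
    exact ⟨m, by simp only [Pi.zero_apply, sub_zero]; linarith [hm]⟩
  · right
    have hTz : T = 0 := by
      exact le_antisymm (Real.sqrt_eq_zero'.mp h) hT0
    have hvi : ∀ i, v i = 0 := by
      intro i
      have := (Finset.sum_eq_zero_iff_of_nonneg (fun i _ => sq_nonneg (v i))).mp hTz i
        (Finset.mem_univ i)
      exact sq_eq_zero_iff.mp this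
    intro i
    have hthis : Real.sin ((k i - p i) / 2) = 0 := hvi i
    rcases Real.sin_eq_zero_iff.mp hthis with ⟨m, hm⟩
    exact ⟨-m, by push_cast; linarith [hm]⟩
end

section
/- Let ω(k) = |k|_{Λ*}^α on the d-torus with 0 < α ≤ 1. Then for any k, the only solutions of ω(p) = ω(k) + ω(q) with p ≡ k + q (mod 2π) and k ≢ 0 are p ≡ k (hence q ≡ 0) . -/
open Real

lemma latticeNorm_nonneg {d : ℕ} (k : Fin d → ℝ) : 0 ≤ latticeNorm k :=
  Real.sqrt_nonneg _

lemma sin_sq_shift (x : ℝ) (m : ℤ) :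
    Real.sin ((x + 2 * Real.pi * m) / 2) ^ 2 = Real.sin (x / 2) ^ 2 := by
  have : (x + 2 * Real.pi * m) / 2 = x / 2 + m * Real.pi := by ring
  rw [this, Real.sin_add_int_mul_pi, mul_pow]
  have h2 : ((-1 : ℝ) ^ m) ^ 2 = 1 := by
    rcases Int.even_or_odd m with h | h
    · rw [h.neg_one_zpow]; norm_num
    · rw [Odd.neg_one_zpow h]; norm_num
  rw [mul_comm, h2, mul_one]

lemma latticeNorm_congr {d : ℕ} {a b : Fin d → ℝ} (h : congTorus a b) :
    latticeNorm a = latticeNorm b := by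
  unfold latticeNorm
  congr 1
  congr 1
  apply Finset.sum_congr rfl
  intro i _
  obtain ⟨m, hm⟩ := h i
  have : a i = b i + 2 * Real.pi * m := by linarith
  rw [this, sin_sq_shift]

lemma latticeNorm_eq_zero_iff {d : ℕ} (q : Fin d → ℝ) :
    latticeNorm q = 0 ↔ ∀ i, Real.sin (q i / 2) = 0 := by
  unfold latticeNorm
  have hnn : (0:ℝ) ≤ 4 * ∑ i, Real.sin (q i / 2) ^ 2 := by
    positivity
  rw [Real.sqrt_eq_zero hnn]
  constructor
  · intro h i
    have hsum : ∑ i, Real.sin (q i / 2) ^ 2 = 0 := by linarith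
    have := (Finset.sum_eq_zero_iff_of_nonneg (fun i _ => sq_nonneg (Real.sin (q i / 2)))).1 hsum i (Finset.mem_univ i)
    exact pow_eq_zero_iff (by norm_num) |>.1 this
  · intro h
    have : ∑ i, Real.sin (q i / 2) ^ 2 = 0 :=
      Finset.sum_eq_zero fun i _ => by rw [h i]; ring
    rw [this]; ring

lemma abs_cos_lt_one {y : ℝ} (hy : Real.sin y ≠ 0) : |Real.cos y| < 1 := by
  have h := Real.sin_sq_add_cos_sq y
  have hs : 0 < Real.sin y ^ 2 := by positivity
  nlinarith [abs_nonneg (Real.cos y), sq_abs (Real.cos y)]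

lemma abs_sin_add_lt {x y : ℝ} (hx : Real.sin x ≠ 0) (hy : Real.sin y ≠ 0) :
    |Real.sin (x + y)| < |Real.sin x| + |Real.sin y| := by
  rw [Real.sin_add]
  have hx' : 0 < |Real.sin x| := abs_pos.2 hx
  have hcy : |Real.cos y| < 1 := abs_cos_lt_one hy
  calc |Real.sin x * Real.cos y + Real.cos x * Real.sin y|
      ≤ |Real.sin x * Real.cos y| + |Real.cos x * Real.sin y| := abs_add_le _ _
    _ = |Real.sin x| * |Real.cos y| + |Real.cos x| * |Real.sin y| := by rw [abs_mul, abs_mul]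
    _ < |Real.sin x| * 1 + 1 * |Real.sin y| := by
        have h1 : |Real.sin x| * |Real.cos y| < |Real.sin x| * 1 :=
          mul_lt_mul_of_pos_left hcy hx'
        have h2 : |Real.cos x| * |Real.sin y| ≤ 1 * |Real.sin y| :=
          mul_le_mul_of_nonneg_right (Real.abs_cos_le_one x) (abs_nonneg _)
        linarith
    _ = |Real.sin x| + |Real.sin y| := by ring

lemma lattice_strict {d : ℕ} (k q : Fin d → ℝ) (hA : 0 < latticeNorm k)
    (hB : 0 < latticeNorm q) :
    latticeNorm (k + q) < latticeNorm k + latticeNorm q := by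
  set a : Fin d → ℝ := fun i => |Real.sin (k i / 2)| with ha
  set b : Fin d → ℝ := fun i => |Real.sin (q i / 2)| with hb
  set c : Fin d → ℝ := fun i => |Real.sin ((k i + q i) / 2)| with hc
  have hcle : ∀ i, c i ≤ a i + b i := fun i => by
    have := abs_sin_add_le (k i / 2) (q i / 2)
    simpa [hc, ha, hb, add_div] using this
  set Sa := ∑ i, a i ^ 2 with hSa
  set Sb := ∑ i, b i ^ 2 with hSb
  set Sc := ∑ i, c i ^ 2 with hSc
  have hSa0 : 0 ≤ Sa := Finset.sum_nonneg fun i _ => sq_nonneg _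
  have hSb0 : 0 ≤ Sb := Finset.sum_nonneg fun i _ => sq_nonneg _
  have hSc0 : 0 ≤ Sc := Finset.sum_nonneg fun i _ => sq_nonneg _
  have hAeq : latticeNorm k = 2 * Real.sqrt Sa := by
    unfold latticeNorm
    rw [show (4:ℝ) * ∑ i, Real.sin (k i / 2) ^ 2 = 4 * Sa by
      simp only [hSa, ha, sq_abs]]
    rw [show (4:ℝ) * Sa = 2^2 * Sa by norm_num, Real.sqrt_mul (by positivity), Real.sqrt_sq (by norm_num)]
  have hBeq : latticeNorm q = 2 * Real.sqrt Sb := by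
    unfold latticeNorm
    rw [show (4:ℝ) * ∑ i, Real.sin (q i / 2) ^ 2 = 4 * Sb by
      simp only [hSb, hb, sq_abs]]
    rw [show (4:ℝ) * Sb = 2^2 * Sb by norm_num, Real.sqrt_mul (by positivity), Real.sqrt_sq (by norm_num)]
  have hCeq : latticeNorm (k + q) = 2 * Real.sqrt Sc := by
    unfold latticeNorm
    rw [show (4:ℝ) * ∑ i, Real.sin ((k + q) i / 2) ^ 2 = 4 * Sc by
      simp only [hSc, hc, sq_abs, Pi.add_apply]]
    rw [show (4:ℝ) * Sc = 2^2 * Sc by norm_num, Real.sqrt_mul (by positivity), Real.sqrt_sq (by norm_num)]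
  have hsa : 0 < Real.sqrt Sa := by
    rw [hAeq] at hA; linarith
  have hsb : 0 < Real.sqrt Sb := by
    rw [hBeq] at hB; linarith
  -- Cauchy-Schwarz
  have hCS : (∑ i, a i * b i) ≤ Real.sqrt Sa * Real.sqrt Sb := by
    have hcs2 := Finset.sum_mul_sq_le_sq_mul_sq Finset.univ a b
    have hab0 : 0 ≤ ∑ i, a i * b i :=
      Finset.sum_nonneg fun i _ => mul_nonneg (abs_nonneg _) (abs_nonneg _)
    calc (∑ i, a i * b i) = Real.sqrt ((∑ i, a i * b i)^2) := (Real.sqrt_sq hab0).symm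
      _ ≤ Real.sqrt ((∑ i, a i ^ 2) * ∑ i, b i ^ 2) := Real.sqrt_le_sqrt hcs2
      _ = Real.sqrt Sa * Real.sqrt Sb := by
          rw [Real.sqrt_mul hSa0]
  have hsum_le : Sc ≤ Sa + Sb + 2 * ∑ i, a i * b i := by
    have : Sc ≤ ∑ i, (a i + b i) ^ 2 := by
      apply Finset.sum_le_sum
      intro i _
      exact pow_le_pow_left₀ (abs_nonneg _) (hcle i) 2
    calc Sc ≤ ∑ i, (a i + b i) ^ 2 := this
      _ = Sa + Sb + 2 * ∑ i, a i * b i := by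
          rw [hSa, hSb, ← Finset.sum_add_distrib, Finset.mul_sum, ← Finset.sum_add_distrib]
          apply Finset.sum_congr rfl; intro i _; ring
  have key : Sc < Sa + Sb + 2 * (Real.sqrt Sa * Real.sqrt Sb) := by
    rcases lt_or_eq_of_le hCS with hlt | heq
    · nlinarith
    · -- equality in CS; the sum of products is positive
      have hab_pos : 0 < ∑ i, a i * b i := by rw [heq]; exact mul_pos hsa hsb
      obtain ⟨i0, _, hi0⟩ := Finset.exists_ne_zero_of_sum_ne_zero hab_pos.ne'
      have hai : a i0 ≠ 0 := fun h => hi0 (by rw [h]; ring)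
      have hbi : b i0 ≠ 0 := fun h => hi0 (by rw [h]; ring)
      have hstrict : c i0 < a i0 + b i0 := by
        have := abs_sin_add_lt (x := k i0 / 2) (y := q i0 / 2)
          (abs_ne_zero.mp hai) (abs_ne_zero.mp hbi)
        simpa [hc, ha, hb, add_div] using this
      have hSc_lt : Sc < ∑ i, (a i + b i) ^ 2 := by
        apply Finset.sum_lt_sum
        · intro i _; exact pow_le_pow_left₀ (abs_nonneg _) (hcle i) 2
        · exact ⟨i0, Finset.mem_univ i0,
            pow_lt_pow_left₀ hstrict (abs_nonneg _) two_ne_zero⟩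
      have hexp : ∑ i, (a i + b i) ^ 2 = Sa + Sb + 2 * ∑ i, a i * b i := by
        rw [hSa, hSb, ← Finset.sum_add_distrib, Finset.mul_sum, ← Finset.sum_add_distrib]
        apply Finset.sum_congr rfl; intro i _; ring
      rw [← heq]
      calc Sc < ∑ i, (a i + b i) ^ 2 := hSc_lt
        _ = Sa + Sb + 2 * ∑ i, a i * b i := hexp
        _ ≤ Sa + Sb + 2 * ∑ i, a i * b i := le_refl _
  rw [hAeq, hBeq, hCeq]
  have hsum_pos : 0 < 2 * Real.sqrt Sa + 2 * Real.sqrt Sb := by linarith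
  rw [show (2:ℝ) * Real.sqrt Sc = Real.sqrt (4 * Sc) by
    rw [show (4:ℝ) * Sc = 2^2 * Sc by norm_num, Real.sqrt_mul (by positivity), Real.sqrt_sq (by norm_num)]]
  rw [Real.sqrt_lt' hsum_pos]
  have h1 : Real.sqrt Sa ^ 2 = Sa := Real.sq_sqrt hSa0
  have h2 : Real.sqrt Sb ^ 2 = Sb := Real.sq_sqrt hSb0
  nlinarith

lemma rpow_subadd {α : ℝ} (hα : 0 ≤ α) (h1 : α ≤ 1) {A B : ℝ} (hA : 0 ≤ A) (hB : 0 ≤ B) :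
    (A + B) ^ α ≤ A ^ α + B ^ α := by
  lift A to NNReal using hA
  lift B to NNReal using hB
  have := NNReal.rpow_add_le_add_rpow A B hα h1
  exact_mod_cast this

/-- For `ω(k) = |k|_{Λ*}^α`, `0 < α ≤ 1`, the only solutions of
`ω(p) = ω(k) + ω(q)` with `p ≡ k + q` (mod 2π) and `k ≢ 0` are `p ≡ k` (hence `q ≡ 0`). -/
theorem stmt3 {d : ℕ} (α : ℝ) (h0 : 0 < α) (h1 : α ≤ 1) (k p q : Fin d → ℝ)
    (hres : latticeNorm p ^ α = latticeNorm k ^ α + latticeNorm q ^ α)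
    (hcong : congTorus p (k + q)) (hk : ¬ congTorus k 0) :
    congTorus p k ∧ congTorus q 0 := by
  -- k has positive norm
  have hA : 0 < latticeNorm k := by
    rcases (latticeNorm_nonneg k).lt_or_eq with h | h
    · exact h
    · exfalso
      apply hk
      intro i
      have := (latticeNorm_eq_zero_iff k).1 h.symm i
      rw [Real.sin_eq_zero_iff] at this
      obtain ⟨n, hn⟩ := this
      exact ⟨n, by push_cast; simp only [Pi.zero_apply, sub_zero]; linarith⟩
  -- norm of p equals norm of k+q
  have hinv : latticeNorm p = latticeNorm (k + q) := latticeNorm_congr hcong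
  -- q has zero norm
  have hB : latticeNorm q = 0 := by
    by_contra hB0
    have hBpos : 0 < latticeNorm q := (latticeNorm_nonneg q).lt_of_ne (Ne.symm hB0)
    have hlt : latticeNorm (k + q) < latticeNorm k + latticeNorm q :=
      lattice_strict k q hA hBpos
    have h2 : latticeNorm (k + q) ^ α < (latticeNorm k + latticeNorm q) ^ α :=
      Real.rpow_lt_rpow (latticeNorm_nonneg _) hlt h0
    have h3 : (latticeNorm k + latticeNorm q) ^ α ≤ latticeNorm k ^ α + latticeNorm q ^ α :=
      rpow_subadd h0.le h1 hA.le hBpos.le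
    rw [hinv] at hres
    linarith
  -- conclude
  have hq0 : congTorus q 0 := by
    intro i
    have := (latticeNorm_eq_zero_iff q).1 hB i
    rw [Real.sin_eq_zero_iff] at this
    obtain ⟨n, hn⟩ := this
    exact ⟨n, by push_cast; simp only [Pi.zero_apply, sub_zero]; linarith⟩
  refine ⟨?_, hq0⟩
  intro i
  obtain ⟨m, hm⟩ := hcong i
  obtain ⟨n, hn⟩ := hq0 i
  refine ⟨m + n, ?_⟩
  simp only [Pi.add_apply] at hm
  simp only [Pi.zero_apply, sub_zero] at hn
  push_cast
  linarith
end

section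
/- Let ω(k) = C|k|^α on ℝ^d with C > 0 and α > 1. Suppose p, q, k ∈ ℝ^d with s₂, s₃ ∈ {−1, +1} satisfy the resonance conditions s₂ω(p) + s₃ω(q) = ω(k), s₂p + s₃q = k, and the criticality condition ∇ω(p) = ∇ω(q) with p ≠ 0. Then k = 0 and p = q. -/
/-- For `ω(k) = C|k|^α`, `α > 1`: resonance `s₂ω(p) + s₃ω(q) = ω(k)`,
momentum `s₂p + s₃q = k`, and criticality `∇ω(p) = ∇ω(q)` with `p ≠ 0` force
`k = 0` and `p = q`. -/
theorem stmt8 {d : ℕ} (α : ℝ) (hα : 1 < α) (C : ℝ) (hC : 0 < C)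
    (s₂ s₃ : ℝ) (hs₂ : s₂ = 1 ∨ s₂ = -1) (hs₃ : s₃ = 1 ∨ s₃ = -1)
    (p q k : EuclideanSpace ℝ (Fin d))
    (hres : s₂ * (C * ‖p‖ ^ α) + s₃ * (C * ‖q‖ ^ α) = C * ‖k‖ ^ α)
    (hmom : s₂ • p + s₃ • q = k)
    (hcrit : ‖p‖ ^ (α - 2) • p = ‖q‖ ^ (α - 2) • q)
    (hp : p ≠ 0) :
    k = 0 ∧ p = q := by
  have hpn : (0:ℝ) < ‖p‖ := norm_pos_iff.mpr hp
  have hq : q ≠ 0 := by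
    intro h
    apply hp
    rw [h] at hcrit
    simp at hcrit
    rcases hcrit with h1 | h1
    · exact absurd h1 (ne_of_gt (Real.rpow_pos_of_pos hpn _))
    · exact h1
  have hqn : (0:ℝ) < ‖q‖ := norm_pos_iff.mpr hq
  -- norms equal
  have hnorm : ‖p‖ = ‖q‖ := by
    have h1 : ‖p‖ ^ (α - 2) * ‖p‖ = ‖q‖ ^ (α - 2) * ‖q‖ := by
      have := congrArg norm hcrit
      simpa [norm_smul, abs_of_nonneg (Real.rpow_nonneg (norm_nonneg _) _)] using this
    have e1 : ∀ x : ℝ, 0 < x → x ^ (α - 1) = x ^ (α - 2) * x := by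
      intro x hx
      rw [show α - 1 = (α - 2) + 1 by ring, Real.rpow_add hx, Real.rpow_one]
    have h2 : ‖p‖ ^ (α - 1) = ‖q‖ ^ (α - 1) := by
      rw [e1 _ hpn, e1 _ hqn, h1]
    have hexp : (0:ℝ) < α - 1 := by linarith
    rcases lt_trichotomy ‖p‖ ‖q‖ with h | h | h
    · exact absurd h2 (ne_of_lt (Real.rpow_lt_rpow (le_of_lt hpn) h hexp))
    · exact h
    · exact absurd h2.symm (ne_of_lt (Real.rpow_lt_rpow (le_of_lt hqn) h hexp))
  have hpq : p = q := by
    rw [← hnorm] at hcrit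
    exact smul_right_injective _ (ne_of_gt (Real.rpow_pos_of_pos hpn (α - 2))) hcrit
  refine ⟨?_, hpq⟩
  subst hpq
  rw [← hnorm] at hres
  have hk : k = (s₂ + s₃) • p := by rw [← hmom, add_smul]
  have hres' : (s₂ + s₃) * (C * ‖p‖ ^ α) = C * ‖k‖ ^ α := by ring_nf; ring_nf at hres; linarith
  have hpα : (0:ℝ) < ‖p‖ ^ α := Real.rpow_pos_of_pos hpn α
  rcases hs₂ with rfl | rfl <;> rcases hs₃ with rfl | rfl
  · -- s₂ + s₃ = 2 : impossible
    exfalso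
    have hk2 : ‖k‖ = 2 * ‖p‖ := by
      rw [hk, norm_smul]; norm_num
    rw [hk2, Real.mul_rpow (by norm_num) (norm_nonneg _)] at hres'
    have h2α : (2:ℝ) < 2 ^ α := by
      calc (2:ℝ) = 2 ^ (1:ℝ) := by norm_num
      _ < 2 ^ α := (Real.rpow_lt_rpow_left_iff (by norm_num)).mpr hα
    nlinarith [mul_lt_mul_of_pos_right h2α (mul_pos hC hpα)]
  · simp [hk]
  · simp [hk]
  · -- s₂ + s₃ = -2 : impossible
    exfalso
    have : (0:ℝ) ≤ C * ‖k‖ ^ α := by positivity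
    nlinarith
end

section
/- For the Rossby/drift wave dispersion ω(k) = −β ρ² k₁ / (1 + ρ²|k|²) on ℝ² and a zonal wavevector k = (0, k_y), the resonance function E(p) = ω(p) + ω(k − p) − ω(k) vanishes if and only if p₁ = 0 or k·(p − k/2) = 0 (i.e. p₂ = k_y/2). In particular the resonant set is the union of the two lines {p₁ = 0} and {p₂ = k_y/2}. -/
/-- Rossby/drift wave dispersion on ℝ². -/
noncomputable def rossbyOmega (β ρ : ℝ) (v : ℝ × ℝ) : ℝ :=
  -β * ρ ^ 2 * v.1 / (1 + ρ ^ 2 * (v.1 ^ 2 + v.2 ^ 2))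

/-- For a zonal wavevector `k = (0, k_y)`, the resonance function
`E(p) = ω(p) + ω(k−p) − ω(k)` vanishes iff `p₁ = 0` or `k·(p − k/2) = 0`. -/
theorem stmt10 (β ρ ky : ℝ) (hβ : 0 < β) (hρ : 0 < ρ) (p : ℝ × ℝ) :
    rossbyOmega β ρ p + rossbyOmega β ρ (((0 : ℝ), ky) - p)
        - rossbyOmega β ρ ((0 : ℝ), ky) = 0 ↔
      p.1 = 0 ∨ (0 * (p.1 - 0 / 2) + ky * (p.2 - ky / 2) = 0) := by
  have hD1 : (1 + ρ ^ 2 * (p.1 ^ 2 + p.2 ^ 2)) ≠ 0 := by positivity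
  have hD2 : (1 + ρ ^ 2 * ((0 - p.1) ^ 2 + (ky - p.2) ^ 2)) ≠ 0 := by positivity
  have hD3 : (1 + ρ ^ 2 * (0 ^ 2 + ky ^ 2)) ≠ 0 := by positivity
  simp only [rossbyOmega, Prod.fst_sub, Prod.snd_sub]
  rw [div_add_div _ _ hD1 hD2, div_sub_div _ _ (mul_ne_zero hD1 hD2) hD3,
    div_eq_zero_iff]
  have hden : ¬ ((1 + ρ ^ 2 * (p.1 ^ 2 + p.2 ^ 2)) *
      (1 + ρ ^ 2 * ((0 - p.1) ^ 2 + (ky - p.2) ^ 2)) *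
      (1 + ρ ^ 2 * (0 ^ 2 + ky ^ 2)) = 0) := by positivity
  have key : (-β * ρ ^ 2 * p.1 * (1 + ρ ^ 2 * ((0 - p.1) ^ 2 + (ky - p.2) ^ 2)) +
        (1 + ρ ^ 2 * (p.1 ^ 2 + p.2 ^ 2)) * (-β * ρ ^ 2 * (0 - p.1))) *
        (1 + ρ ^ 2 * (0 ^ 2 + ky ^ 2)) -
      (1 + ρ ^ 2 * (p.1 ^ 2 + p.2 ^ 2)) *
        (1 + ρ ^ 2 * ((0 - p.1) ^ 2 + (ky - p.2) ^ 2)) * (-β * ρ ^ 2 * 0) =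
      (-β * ρ ^ 4 * (1 + ρ ^ 2 * (0 ^ 2 + ky ^ 2))) *
        (p.1 * (ky * (ky - 2 * p.2))) := by ring
  rw [key]
  have hc : (-β * ρ ^ 4 * (1 + ρ ^ 2 * (0 ^ 2 + ky ^ 2))) ≠ 0 := by
    have : (0:ℝ) < β * ρ ^ 4 * (1 + ρ ^ 2 * (0 ^ 2 + ky ^ 2)) := by positivity
    intro h; nlinarith
  constructor
  · rintro (h | h)
    · rcases mul_eq_zero.1 h with h | h
      · exact absurd h hc
      · rcases mul_eq_zero.1 h with h | h
        · exact Or.inl h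
        · right; nlinarith [h]
    · exact absurd h hden
  · rintro (h | h)
    · left; rw [h]; ring
    · left; have : ky * (ky - 2 * p.2) = 0 := by nlinarith [h]
      rw [this]; ring
end

section
/- For Rossby waves with zonal k = (0, k_y), k_y ≠ 0, the gradient of the resonance function satisfies ∇_p E(p; k) = (2βρ⁴k_y / ((1+ρ²|p|²)(1+ρ²|q|²))) · ((p₂ − k_y/2), p₁) on the resonant set, where q = k − p. In particular ∇_p E vanishes at the critical point p = (0, k_y/2). -/
/-- The resonance function for zonal `k = (0,k_y)`. -/
noncomputable def rossbyE (β ρ ky : ℝ) (p : ℝ × ℝ) : ℝ :=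
  rossbyOmega β ρ p + rossbyOmega β ρ (((0 : ℝ), ky) - p) - rossbyOmega β ρ ((0 : ℝ), ky)

noncomputable def omegaD (β ρ : ℝ) (v : ℝ × ℝ) : ℝ × ℝ →L[ℝ] ℝ :=
  (-β * ρ ^ 2 * v.1) • ((-((1 + ρ ^ 2 * (v.1 * v.1 + v.2 * v.2)) ^ 2)⁻¹) •
      ((ρ ^ 2) • ((v.1 • ContinuousLinearMap.fst ℝ ℝ ℝ + v.1 • ContinuousLinearMap.fst ℝ ℝ ℝ)
        + (v.2 • ContinuousLinearMap.snd ℝ ℝ ℝ + v.2 • ContinuousLinearMap.snd ℝ ℝ ℝ))))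
  + (1 + ρ ^ 2 * (v.1 * v.1 + v.2 * v.2))⁻¹ • ((-β * ρ ^ 2) • ContinuousLinearMap.fst ℝ ℝ ℝ)

lemma denom_ne' (ρ : ℝ) (v : ℝ × ℝ) : (1 + ρ ^ 2 * (v.1 * v.1 + v.2 * v.2)) ≠ 0 := by
  nlinarith [mul_self_nonneg (ρ * v.1), mul_self_nonneg (ρ * v.2)]

lemma omega_hasFDerivAt (β ρ : ℝ) (v : ℝ × ℝ) :
    HasFDerivAt (rossbyOmega β ρ) (omegaD β ρ v) v := by
  have hN : HasFDerivAt (fun w : ℝ × ℝ => -β * ρ ^ 2 * w.1)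
      ((-β * ρ ^ 2) • ContinuousLinearMap.fst ℝ ℝ ℝ) v :=
    (hasFDerivAt_fst).const_mul _
  have h1 : HasFDerivAt (fun w : ℝ × ℝ => w.1 * w.1)
      (v.1 • ContinuousLinearMap.fst ℝ ℝ ℝ + v.1 • ContinuousLinearMap.fst ℝ ℝ ℝ) v :=
    hasFDerivAt_fst.mul hasFDerivAt_fst
  have h2 : HasFDerivAt (fun w : ℝ × ℝ => w.2 * w.2)
      (v.2 • ContinuousLinearMap.snd ℝ ℝ ℝ + v.2 • ContinuousLinearMap.snd ℝ ℝ ℝ) v :=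
    hasFDerivAt_snd.mul hasFDerivAt_snd
  have hD : HasFDerivAt (fun w : ℝ × ℝ => 1 + ρ ^ 2 * (w.1 * w.1 + w.2 * w.2))
      ((ρ ^ 2) • ((v.1 • ContinuousLinearMap.fst ℝ ℝ ℝ + v.1 • ContinuousLinearMap.fst ℝ ℝ ℝ)
        + (v.2 • ContinuousLinearMap.snd ℝ ℝ ℝ + v.2 • ContinuousLinearMap.snd ℝ ℝ ℝ))) v :=
    ((h1.add h2).const_mul _).const_add 1
  have hinv : HasFDerivAt (fun w : ℝ × ℝ => (1 + ρ ^ 2 * (w.1 * w.1 + w.2 * w.2))⁻¹)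
      ((-((1 + ρ ^ 2 * (v.1 * v.1 + v.2 * v.2)) ^ 2)⁻¹) •
        ((ρ ^ 2) • ((v.1 • ContinuousLinearMap.fst ℝ ℝ ℝ + v.1 • ContinuousLinearMap.fst ℝ ℝ ℝ)
          + (v.2 • ContinuousLinearMap.snd ℝ ℝ ℝ + v.2 • ContinuousLinearMap.snd ℝ ℝ ℝ)))) v :=
    (hasDerivAt_inv (denom_ne' ρ v)).comp_hasFDerivAt v hD
  have hfun : rossbyOmega β ρ = fun y : ℝ × ℝ =>
      (-β * ρ ^ 2 * y.1) * (1 + ρ ^ 2 * (y.1 * y.1 + y.2 * y.2))⁻¹ := by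
    funext y
    simp [rossbyOmega, div_eq_mul_inv, sq]
  rw [hfun, omegaD]
  exact hN.mul hinv

lemma rossbyE_hasFDerivAt (β ρ ky : ℝ) (p : ℝ × ℝ) :
    HasFDerivAt (rossbyE β ρ ky)
      (omegaD β ρ p + (omegaD β ρ (((0 : ℝ), ky) - p)).comp
        (-(ContinuousLinearMap.id ℝ (ℝ × ℝ)))) p := by
  have hsub : HasFDerivAt (fun w : ℝ × ℝ => ((0 : ℝ), ky) - w)
      (-(ContinuousLinearMap.id ℝ (ℝ × ℝ))) p := by
    simpa using (hasFDerivAt_id p).const_sub (((0 : ℝ), ky) : ℝ × ℝ)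
  exact ((omega_hasFDerivAt β ρ p).add
    ((omega_hasFDerivAt β ρ (((0 : ℝ), ky) - p)).comp p hsub)).sub_const _

/-- On the resonant set `{p₁ = 0} ∪ {p₂ = k_y/2}`, the gradient of the resonance
function is `(2βρ⁴k_y/((1+ρ²|p|²)(1+ρ²|q|²))) ((p₂ − k_y/2), p₁)`, `q = k − p`;
in particular it vanishes at the critical point `p = (0, k_y/2)`. -/
theorem stmt11 (β ρ ky : ℝ) (hβ : 0 < β) (hρ : 0 < ρ) (hky : ky ≠ 0)
    (p : ℝ × ℝ) (hp : p.1 = 0 ∨ p.2 = ky / 2) :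
    fderiv ℝ (rossbyE β ρ ky) p (1, 0)
        = 2 * β * ρ ^ 4 * ky
            / ((1 + ρ ^ 2 * (p.1 ^ 2 + p.2 ^ 2))
                * (1 + ρ ^ 2 * ((0 - p.1) ^ 2 + (ky - p.2) ^ 2)))
          * (p.2 - ky / 2) ∧
    fderiv ℝ (rossbyE β ρ ky) p (0, 1)
        = 2 * β * ρ ^ 4 * ky
            / ((1 + ρ ^ 2 * (p.1 ^ 2 + p.2 ^ 2))
                * (1 + ρ ^ 2 * ((0 - p.1) ^ 2 + (ky - p.2) ^ 2)))
          * p.1 ∧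
    fderiv ℝ (rossbyE β ρ ky) ((0 : ℝ), ky / 2) = 0 := by
  have key : ∀ q : ℝ × ℝ, q.1 = 0 ∨ q.2 = ky / 2 → ∀ a b : ℝ,
      fderiv ℝ (rossbyE β ρ ky) q (a, b)
        = 2 * β * ρ ^ 4 * ky
            / ((1 + ρ ^ 2 * (q.1 ^ 2 + q.2 ^ 2))
                * (1 + ρ ^ 2 * ((0 - q.1) ^ 2 + (ky - q.2) ^ 2)))
          * ((q.2 - ky / 2) * a + q.1 * b) := by
    rintro ⟨x, y⟩ hq a b
    rw [(rossbyE_hasFDerivAt β ρ ky (x, y)).fderiv]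
    simp only [omegaD, Prod.fst_sub, Prod.snd_sub, ContinuousLinearMap.add_apply,
      ContinuousLinearMap.comp_apply, ContinuousLinearMap.smul_apply,
      ContinuousLinearMap.neg_apply, ContinuousLinearMap.id_apply, Prod.neg_mk,
      ContinuousLinearMap.coe_fst', ContinuousLinearMap.coe_snd', smul_eq_mul]
    rw [show (1 + ρ ^ 2 * (x * x + y * y)) = 1 + ρ ^ 2 * (x ^ 2 + y ^ 2) from by ring,
      show (1 + ρ ^ 2 * ((0 - x) * (0 - x) + (ky - y) * (ky - y)))
        = 1 + ρ ^ 2 * ((0 - x) ^ 2 + (ky - y) ^ 2) from by ring]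
    have hA' : 1 + ρ ^ 2 * (x ^ 2 + y ^ 2) ≠ 0 := by positivity
    have hB' : 1 + ρ ^ 2 * ((0 - x) ^ 2 + (ky - y) ^ 2) ≠ 0 := by positivity
    field_simp
    rcases hq with h | h <;> subst h <;> ring
  refine ⟨?_, ?_, ?_⟩
  · simpa using key p hp 1 0
  · simpa using key p hp 0 1
  · have h0 : ((0 : ℝ), ky / 2).1 = 0 ∨ ((0 : ℝ), ky / 2).2 = ky / 2 := Or.inl rfl
    apply ContinuousLinearMap.ext
    rintro ⟨a, b⟩
    have := key ((0 : ℝ), ky / 2) h0 a b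
    simpa using this
end

section
/- Let ω(k) = s k² + α k³ on ℝ with α ≠ 0 and k_* = −s/(3α). For k = k_*, the resonance function E(p,q;k_*) = 3α(p+q−2k_*)(p−k_*)(q−k_*) has a critical point at (p,q) = (k_*,k_*) whose Hessian matrix vanishes identically (i.e., the critical point is doubly degenerate), and under the linear change of variables δp = (x−y)/(6α)^{1/3}, δq = −(x+y)/(6α)^{1/3} (with δp = p−k_*, δq = q−k_*), E takes the normal form E = x²y − y³. -/
/-!
Translating to the critical point, `E(k_* + δp, k_* + δq) = 3α (δp + δq) δp δq` is a product of
three functions vanishing at the origin. Differentiating such a product once leaves in every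
term a product of two of them, and differentiating twice still leaves one factor, so both the
gradient and the Hessian vanish there. The normal form is the identity
`3α · (−2y) (x − y) (−(x + y)) = 6α (x²y − y³)`, divided by `c³ = 6α`.
-/

section VanishingProducts

variable {𝕜 E F : Type*} [NontriviallyNormedField 𝕜] [NormedAddCommGroup E] [NormedSpace 𝕜 E]
  [NormedAddCommGroup F] [NormedSpace 𝕜 F] {c : E → 𝕜} {f : E → F} {c' : E →L[𝕜] 𝕜}
  {f' : E →L[𝕜] F} {x : E}

theorem HasFDerivAt.smul_of_eq_zero_of_eq_zero (hc : HasFDerivAt c c' x)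
    (hf : HasFDerivAt f f' x) (hcx : c x = 0) (hfx : f x = 0) :
    HasFDerivAt (fun y => c y • f y) (0 : E →L[𝕜] F) x :=
  (hc.smul hf).congr_fderiv (by simp [hcx, hfx])

theorem HasFDerivAt.smul_of_eq_zero_of_hasFDerivAt_zero (hc : HasFDerivAt c (0 : E →L[𝕜] 𝕜) x)
    (hf : HasFDerivAt f f' x) (hcx : c x = 0) :
    HasFDerivAt (fun y => c y • f y) (0 : E →L[𝕜] F) x :=
  (hc.smul hf).congr_fderiv (by simp [hcx])

variable {u v w : E → 𝕜}

theorem hasFDerivAt_mul_mul_zero_of_eq_zero (hu : DifferentiableAt 𝕜 u x)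
    (hv : DifferentiableAt 𝕜 v x) (hw : DifferentiableAt 𝕜 w x) (hux : u x = 0) (hvx : v x = 0) :
    HasFDerivAt (fun y => u y * v y * w y) (0 : E →L[𝕜] 𝕜) x :=
  (hu.hasFDerivAt.smul_of_eq_zero_of_eq_zero hv.hasFDerivAt hux hvx)
    |>.smul_of_eq_zero_of_hasFDerivAt_zero hw.hasFDerivAt (by simp [hux])

theorem fderiv_mul_mul (hu : Differentiable 𝕜 u) (hv : Differentiable 𝕜 v)
    (hw : Differentiable 𝕜 w) :
    fderiv 𝕜 (fun y => u y * v y * w y) =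
      fun y => (u y * v y) • fderiv 𝕜 w y + w y • fderiv 𝕜 (fun y => u y * v y) y := by
  funext y
  exact (((hu.mul hv) y).hasFDerivAt.mul (hw y).hasFDerivAt).fderiv

theorem fderiv_fderiv_mul_mul_eq_zero (hu : ContDiff 𝕜 2 u) (hv : ContDiff 𝕜 2 v)
    (hw : ContDiff 𝕜 2 w) (hux : u x = 0) (hvx : v x = 0) (hwx : w x = 0) :
    fderiv 𝕜 (fderiv 𝕜 (fun y => u y * v y * w y)) x = 0 := by
  have h2 : (2 : WithTop ℕ∞) ≠ 0 := by norm_num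
  have hu₁ := hu.differentiable h2
  have hv₁ := hv.differentiable h2
  have hw₁ := hw.differentiable h2
  have huv : HasFDerivAt (fun y => u y * v y) (0 : E →L[𝕜] 𝕜) x :=
    (hu₁ x).hasFDerivAt.smul_of_eq_zero_of_eq_zero (hv₁ x).hasFDerivAt hux hvx
  have hDuv : Differentiable 𝕜 (fderiv 𝕜 (fun y => u y * v y)) :=
    ((hu.mul hv).fderiv_right (m := 1) (by norm_num)).differentiable (by norm_num)
  have hDw : Differentiable 𝕜 (fderiv 𝕜 w) :=
    (hw.fderiv_right (m := 1) (by norm_num)).differentiable (by norm_num)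
  rw [fderiv_mul_mul hu₁ hv₁ hw₁]
  have h_first := huv.smul_of_eq_zero_of_hasFDerivAt_zero (hDw x).hasFDerivAt (by simp [hux])
  have h_second :=
    (hw₁ x).hasFDerivAt.smul_of_eq_zero_of_eq_zero (hDuv x).hasFDerivAt hwx huv.fderiv
  exact (h_first.add h_second).fderiv.trans (add_zero 0)

theorem iteratedFDeriv_two_mul_mul_eq_zero (hu : ContDiff 𝕜 2 u) (hv : ContDiff 𝕜 2 v)
    (hw : ContDiff 𝕜 2 w) (hux : u x = 0) (hvx : v x = 0) (hwx : w x = 0) :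
    iteratedFDeriv 𝕜 2 (fun y => u y * v y * w y) x = 0 := by
  ext m
  simp [iteratedFDeriv_two_apply, fderiv_fderiv_mul_mul_eq_zero hu hv hw hux hvx hwx]

end VanishingProducts

theorem cubic_normal_form {α c : ℝ} (hc : c ^ 3 = 6 * α) (hc₀ : c ≠ 0) (x y : ℝ) :
    3 * α * ((x - y) / c + -(x + y) / c) * ((x - y) / c) * (-(x + y) / c) = x ^ 2 * y - y ^ 3 := by
  field_simp
  linear_combination (y ^ 3 - x ^ 2 * y) * hc

theorem stmt13_general (s α : ℝ) (hα : 0 < α) :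
    let kst : ℝ := -s / (3 * α)
    let E : ℝ × ℝ → ℝ := fun pq =>
      3 * α * (pq.1 + pq.2 - 2 * kst) * (pq.1 - kst) * (pq.2 - kst)
    let c : ℝ := (6 * α) ^ ((1 : ℝ) / 3)
    fderiv ℝ E (kst, kst) = 0 ∧
    iteratedFDeriv ℝ 2 E (kst, kst) = 0 ∧
    ∀ x y : ℝ, E (kst + (x - y) / c, kst + (-(x + y)) / c) = x ^ 2 * y - y ^ 3 := by
  intro kst E c
  have hu : ContDiff ℝ 2 fun pq : ℝ × ℝ => 3 * α * (pq.1 + pq.2 - 2 * kst) := by fun_prop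
  have hv : ContDiff ℝ 2 fun pq : ℝ × ℝ => pq.1 - kst := by fun_prop
  have hw : ContDiff ℝ 2 fun pq : ℝ × ℝ => pq.2 - kst := by fun_prop
  have hvx : (kst, kst).1 - kst = 0 := sub_self kst
  have hwx : (kst, kst).2 - kst = 0 := sub_self kst
  have hux : 3 * α * ((kst, kst).1 + (kst, kst).2 - 2 * kst) = 0 := by ring
  refine ⟨(hasFDerivAt_mul_mul_zero_of_eq_zero (hu.differentiable (by norm_num) _)
      (hv.differentiable (by norm_num) _) (hw.differentiable (by norm_num) _) hux hvx).fderiv,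
    iteratedFDeriv_two_mul_mul_eq_zero hu hv hw hux hvx hwx, fun x y => ?_⟩
  have hc : c ^ 3 = 6 * α := by
    simpa [c, one_div] using
      Real.rpow_inv_natCast_pow (n := 3) (by positivity : (0 : ℝ) ≤ 6 * α) (by norm_num)
  have hc₀ : c ≠ 0 := (Real.rpow_pos_of_pos (by positivity) _).ne'
  convert cubic_normal_form hc hc₀ x y using 3 <;> dsimp only <;> ring

/-- For the cubic dispersion, at `k = k_* = −s/(3α)` the resonance function
`E(p,q;k_*) = 3α(p+q−2k_*)(p−k_*)(q−k_*)` has a critical point at `(k_*,k_*)` with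
identically vanishing Hessian, and the linear change of variables
`δp = (x−y)/(6α)^{1/3}`, `δq = −(x+y)/(6α)^{1/3}` brings it to the normal form
`E = x²y − y³`. -/
theorem stmt13 (s α : ℝ) (hs : s = 1 ∨ s = -1) (hα : 0 < α) :
    let kst : ℝ := -s / (3 * α)
    let E : ℝ × ℝ → ℝ := fun pq =>
      3 * α * (pq.1 + pq.2 - 2 * kst) * (pq.1 - kst) * (pq.2 - kst)
    let c : ℝ := (6 * α) ^ ((1 : ℝ) / 3)
    fderiv ℝ E (kst, kst) = 0 ∧
    iteratedFDeriv ℝ 2 E (kst, kst) = 0 ∧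
    ∀ x y : ℝ, E (kst + (x - y) / c, kst + (-(x + y)) / c) = x ^ 2 * y - y ^ 3 :=
  stmt13_general s α hα
end

section
/- For a, b, γ > 0, the regularized double integral I = ∫_{−a}^{a} ∫_{−b}^{b} (γ/π) / (r²s² + γ²) ds dr equals (4/π) Ti₂(ab/γ), where Ti₂(x) = ∫₀^x (arctan u)/u du is the inverse tangent integral. Consequently I ~ 2 ln(ab/γ) as γ/(ab) → 0. -/
/-!
Integrating in `s` first gives `(2/π) arctan(rb/γ)/r`, and the substitution `u = rb/γ` turns the
remaining integral over the symmetric interval `[-a, a]` into `(4/π) Ti₂(ab/γ)`. For the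
asymptotics, the inversion formula `Ti₂(x) - Ti₂(1/x) = (π/2) log x` (both sides have derivative
`π/(2x)`, since `arctan x + arctan (1/x) = π/2`) together with `Ti₂(1/x) → Ti₂(0) = 0` gives
`Ti₂(x) ~ (π/2) log x` as `x → ∞`.
-/

open Real Filter MeasureTheory

/-- The inverse tangent integral `Ti₂(x) = ∫₀^x arctan(u)/u du`. -/
noncomputable def Ti2 (x : ℝ) : ℝ := ∫ u in (0 : ℝ)..x, Real.arctan u / u

lemma intervalIntegral.integral_neg_self_of_even {E : Type*} [NormedAddCommGroup E]
    [NormedSpace ℝ E] {f : ℝ → E} (hf : ∀ u, f (-u) = f u)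
    (hint : ∀ c d, IntervalIntegrable f volume c d) (x : ℝ) :
    ∫ u in -x..x, f u = (2 : ℝ) • ∫ u in (0 : ℝ)..x, f u := by
  have hleft : ∫ u in -x..0, f u = ∫ u in (0 : ℝ)..x, f u := by
    simpa [hf] using (integral_comp_neg (a := 0) (b := x) f).symm
  rw [← integral_add_adjacent_intervals (hint (-x) 0) (hint 0 x), hleft, two_smul]

namespace Real

lemma arctan_le_self {x : ℝ} (hx : 0 ≤ x) : arctan x ≤ x := by
  simpa [tan_arctan] using le_tan (arctan_nonneg.2 hx) (arctan_lt_pi_div_two x)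

lemma abs_arctan_le_abs (x : ℝ) : |arctan x| ≤ |x| := by
  rcases le_total 0 x with hx | hx
  · rw [abs_of_nonneg (arctan_nonneg.2 hx), abs_of_nonneg hx]
    exact arctan_le_self hx
  · rw [abs_of_nonpos (arctan_le_zero.2 hx), abs_of_nonpos hx, ← arctan_neg]
    exact arctan_le_self (neg_nonneg.2 hx)

lemma abs_arctan_div_self_le_one (x : ℝ) : |arctan x / x| ≤ 1 := by
  rcases eq_or_ne x 0 with rfl | hx
  · simp
  · rw [abs_div, div_le_one (abs_pos.2 hx)]
    exact abs_arctan_le_abs x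

lemma intervalIntegrable_arctan_div_self (c d : ℝ) :
    IntervalIntegrable (fun u => arctan u / u) volume c d :=
  intervalIntegrable_const.mono_fun'
    (continuous_arctan.measurable.div measurable_id).aestronglyMeasurable
    (ae_of_all _ fun u => abs_arctan_div_self_le_one u)

end Real

lemma continuous_Ti2 : Continuous Ti2 :=
  intervalIntegral.continuous_primitive intervalIntegrable_arctan_div_self 0

lemma hasDerivAt_Ti2 {x : ℝ} (hx : x ≠ 0) : HasDerivAt Ti2 (arctan x / x) x :=
  intervalIntegral.integral_hasDerivAt_right (intervalIntegrable_arctan_div_self 0 x)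
    (continuous_arctan.measurable.div measurable_id).stronglyMeasurable.stronglyMeasurableAtFilter
    (continuous_arctan.continuousAt.div continuousAt_id hx)

lemma Ti2_sub_Ti2_inv {x : ℝ} (hx : 0 < x) : Ti2 x - Ti2 x⁻¹ = π / 2 * log x := by
  set F : ℝ → ℝ := fun y => Ti2 y - Ti2 y⁻¹ - π / 2 * log y
  have hF : ∀ y ∈ Set.Ioi (0 : ℝ), HasDerivAt F 0 y := by
    intro y (hy : 0 < y)
    have hinv : HasDerivAt (fun y => Ti2 y⁻¹) (arctan y⁻¹ / y⁻¹ * -(y ^ 2)⁻¹) y :=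
      (hasDerivAt_Ti2 (inv_ne_zero hy.ne')).comp y (hasDerivAt_inv hy.ne')
    refine (((hasDerivAt_Ti2 hy.ne').sub hinv).sub
      ((hasDerivAt_log hy.ne').const_mul (π / 2))).congr_deriv ?_
    rw [arctan_inv_of_pos hy]
    field_simp
    ring
  have hconst : F x = F 1 :=
    isOpen_Ioi.is_const_of_deriv_eq_zero isPreconnected_Ioi
      (fun y hy => (hF y hy).differentiableAt.differentiableWithinAt)
      (fun y hy => (hF y hy).deriv) hx (Set.mem_Ioi.2 one_pos)
  simpa [F, sub_eq_zero] using hconst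

lemma tendsto_Ti2_div_log_atTop : Tendsto (fun x => Ti2 x / log x) atTop (nhds (π / 2)) := by
  have hinv : Tendsto (fun x => Ti2 x⁻¹) atTop (nhds 0) := by
    have hzero : Ti2 0 = 0 := by simp [Ti2]
    have h := (continuous_Ti2.tendsto 0).comp tendsto_inv_atTop_zero
    rwa [hzero] at h
  have hlim := (hinv.mul tendsto_log_atTop.inv_tendsto_atTop).const_add (π / 2)
  rw [zero_mul, add_zero] at hlim
  refine hlim.congr' ?_
  filter_upwards [eventually_gt_atTop 1] with x hx
  have hlog : log x ≠ 0 := (log_pos hx).ne'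
  rw [Pi.inv_apply, eq_add_of_sub_eq' (Ti2_sub_Ti2_inv (zero_lt_one.trans hx))]
  field_simp
  ring

lemma integral_lorentzian_mul {γ : ℝ} (hγ : γ ≠ 0) {r : ℝ} (hr : r ≠ 0) (b : ℝ) :
    ∫ s in -b..b, (γ / π) / (r ^ 2 * s ^ 2 + γ ^ 2) = 2 / π * (arctan (r * b / γ) / r) := by
  have hderiv : ∀ s, HasDerivAt (fun s => 1 / (π * r) * arctan (r * s / γ))
      ((γ / π) / (r ^ 2 * s ^ 2 + γ ^ 2)) s := by
    intro s
    have hlin : HasDerivAt (fun s => r * s / γ) (r / γ) s := by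
      simpa using ((hasDerivAt_id s).const_mul r).div_const γ
    refine (((hasDerivAt_arctan _).comp s hlin).const_mul (1 / (π * r))).congr_deriv ?_
    field_simp
    ring
  have hcont : Continuous fun s : ℝ => (γ / π) / (r ^ 2 * s ^ 2 + γ ^ 2) :=
    continuous_const.div (by fun_prop) fun s => by positivity
  rw [intervalIntegral.integral_eq_sub_of_hasDerivAt (fun s _ => hderiv s)
    (hcont.intervalIntegrable _ _), mul_neg, neg_div, arctan_neg]
  field_simp
  ring

lemma integral_arctan_mul_div (a c : ℝ) :
    ∫ r in -a..a, arctan (r * c) / r = 2 * Ti2 (a * c) := by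
  rcases eq_or_ne c 0 with rfl | hc
  · simp [Ti2]
  have hscale : ∀ r, arctan (r * c) / r = c * (arctan (r * c) / (r * c)) := by
    intro r
    rcases eq_or_ne r 0 with rfl | hr
    · simp
    · field_simp
  simp_rw [hscale]
  rw [intervalIntegral.integral_const_mul,
    intervalIntegral.integral_comp_mul_right (fun u => arctan u / u) hc, neg_mul,
    intervalIntegral.integral_neg_self_of_even (fun u => by rw [arctan_neg, neg_div_neg_eq])
      intervalIntegrable_arctan_div_self, smul_eq_mul, smul_eq_mul, Ti2]
  field_simp

lemma integral_lorentzian_rect (a b : ℝ) {γ : ℝ} (hγ : γ ≠ 0) :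
    ∫ r in -a..a, ∫ s in -b..b, (γ / π) / (r ^ 2 * s ^ 2 + γ ^ 2) = 4 / π * Ti2 (a * b / γ) := by
  calc ∫ r in -a..a, ∫ s in -b..b, (γ / π) / (r ^ 2 * s ^ 2 + γ ^ 2)
      = ∫ r in -a..a, 2 / π * (arctan (r * (b / γ)) / r) := by
        refine intervalIntegral.integral_congr_ae ((Measure.ae_ne volume 0).mono fun r hr _ => ?_)
        rw [integral_lorentzian_mul hγ hr, mul_div_assoc]
    _ = 4 / π * Ti2 (a * b / γ) := by
        rw [intervalIntegral.integral_const_mul, integral_arctan_mul_div, mul_div_assoc]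
        ring

/-- The regularized double integral `∫∫ δ_γ(rs)` over `[−a,a]×[−b,b]` equals
`(4/π) Ti₂(ab/γ)`, and behaves like `2 ln(ab/γ)` as `γ → 0⁺`. -/
theorem stmt15 (a b : ℝ) (ha : 0 < a) (hb : 0 < b) :
    (∀ γ : ℝ, 0 < γ →
      (∫ r in (-a)..a, ∫ s in (-b)..b, (γ / π) / (r ^ 2 * s ^ 2 + γ ^ 2))
        = 4 / π * Ti2 (a * b / γ)) ∧
    Tendsto (fun γ : ℝ =>
        (∫ r in (-a)..a, ∫ s in (-b)..b, (γ / π) / (r ^ 2 * s ^ 2 + γ ^ 2))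
          / (2 * Real.log (a * b / γ)))
      (nhdsWithin 0 (Set.Ioi 0)) (nhds 1) := by
  refine ⟨fun γ hγ => integral_lorentzian_rect a b hγ.ne', ?_⟩
  have hx : Tendsto (fun γ : ℝ => a * b / γ) (nhdsWithin 0 (Set.Ioi 0)) atTop := by
    simpa only [div_eq_mul_inv] using tendsto_inv_nhdsGT_zero.const_mul_atTop (mul_pos ha hb)
  have hlim := (tendsto_Ti2_div_log_atTop.comp hx).const_mul (2 / π)
  rw [show 2 / π * (π / 2) = 1 by field_simp] at hlim
  refine hlim.congr' ?_
  filter_upwards [self_mem_nhdsWithin] with γ (hγ : 0 < γ)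
  rw [Function.comp_apply, integral_lorentzian_rect a b hγ.ne']
  ring
end
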